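/- Every fixed point x* ∈ Δ_n of F satisfies: (b) x*_i ≥ 1/n for every fully stubborn i (θ_i = 0), with equality x*_i = 1/n if and only if C_ji = 0 for every partially stubborn j (θ_j > 0); (c) x*_i > (1 − θ_i)/n for every partially stubborn i (θ_i > 0), and moreover x*_i < 1/n whenever C_ji = 0 for every partially stubborn j; (d) max_i x*_i < 1/n + θ_ave, where θ_ave = (1/n)Σ_j θ_j. -/

import Mathlib

open Matrix

/-- `W(x) = diag(x) + (I - diag(x)) C` -/
noncomputable def Wmat {n : ℕ} (C : Matrix (Fin n) (Fin n) ℝ) (x : Fin n → ℝ) :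
    Matrix (Fin n) (Fin n) ℝ :=
  Matrix.diagonal x + (1 - Matrix.diagonal x) * C

/-- `F(x) = (I - Θ)(I - W(x)ᵀΘ)⁻¹ (1/n) 1_n` -/
noncomputable def Fmap {n : ℕ} (C : Matrix (Fin n) (Fin n) ℝ) (θ : Fin n → ℝ)
    (x : Fin n → ℝ) : Fin n → ℝ :=
  ((1 - Matrix.diagonal θ) * (1 - (Wmat C x)ᵀ * Matrix.diagonal θ)⁻¹).mulVec
    (fun _ => 1 / (n : ℝ))

/-- The simplex `Δ_n`. -/
def simplex (n : ℕ) : Set (Fin n → ℝ) := {x | (∀ i, 0 ≤ x i) ∧ ∑ i, x i = 1}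

/-!
Put `y = (I - W(x*)ᵀΘ)⁻¹ (1/n) 1`, so that `x*_i = (1 - θ_i) y_i` and `y_i = 1/n + t_i` with
`t = (Θ y)ᵀ W(x*)`, that is `t_i = Σ_j W_ji θ_j y_j ≥ 0`. Hence
`x*_i = (1 - θ_i)/n + (1 - θ_i) t_i`. Since `W_ii = x*_i` and `W_ji = (1 - x*_j) C_ji` for `j ≠ i`,
with `0 < x*_j < 1` and `y_j > 0`, the sum `t_i` vanishes for a fully stubborn `i` exactly when
`C_ji = 0` for all partially stubborn `j`, and `t_i > 0` for a partially stubborn `i`: this is (b)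
and the lower bound of (c). Under the condition of (c) only the diagonal term survives and
`x*_i = (1 - θ_i)/n + θ_i x*_i²`, whose solutions in `(0, 1)` lie below `1/n`. Summing over `i`
gives `Σ_i (1 - θ_i) t_i = Σ_j θ_j / n`, and (d) follows since at least one `θ_j` is positive.
-/

open Finset

theorem Matrix.det_one_sub_transpose_mul_diagonal_ne_zero {ι : Type*} [Fintype ι]
    [DecidableEq ι] {M : Matrix ι ι ℝ} (hM : M ∈ rowStochastic ℝ ι) {θ : ι → ℝ}
    (hθ0 : ∀ i, 0 ≤ θ i) (hθ1 : ∀ i, θ i < 1) : (1 - Mᵀ * diagonal θ).det ≠ 0 := by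
  refine det_ne_zero_of_sum_col_lt_diag fun k => ?_
  have hoff : ∑ i ∈ univ.erase k, ‖(1 - Mᵀ * diagonal θ) i k‖
      = θ k * ∑ i ∈ univ.erase k, M k i := by
    rw [mul_sum]
    refine sum_congr rfl fun i hi => ?_
    simp [one_apply_ne (ne_of_mem_erase hi), abs_of_nonneg (hθ0 k),
      abs_of_nonneg (nonneg_of_mem_rowStochastic hM (i := k) (j := i)), mul_comm]
  have hrow := add_sum_erase _ (M k ·) (mem_univ k)
  rw [sum_row_of_mem_rowStochastic hM] at hrow
  calc ∑ i ∈ univ.erase k, ‖(1 - Mᵀ * diagonal θ) i k‖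
      < 1 - M k k * θ k := by nlinarith [hθ1 k]
    _ ≤ ‖(1 - Mᵀ * diagonal θ) k k‖ := by
      simpa using le_abs_self (1 - M k k * θ k)

theorem Matrix.mul_le_vecMul_apply {ι R : Type*} [Fintype ι] [Semiring R] [PartialOrder R]
    [IsOrderedRing R] {M : Matrix ι ι R} (hM : ∀ i j, 0 ≤ M i j) {v : ι → R}
    (hv : ∀ i, 0 ≤ v i) (i j : ι) : v j * M j i ≤ (v ᵥ* M) i :=
  single_le_sum (f := fun k => v k * M k i) (fun k _ => mul_nonneg (hv k) (hM k i)) (mem_univ j)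

section Wmat

variable {n : ℕ} {C : Matrix (Fin n) (Fin n) ℝ} {x : Fin n → ℝ}

theorem Wmat_apply (i j : Fin n) :
    Wmat C x i j = (if i = j then x i else 0) + (1 - x i) * C i j := by
  simp [Wmat, sub_mul, diagonal_apply]

theorem Wmat_apply_self (hCdiag : ∀ i, C i i = 0) (i : Fin n) : Wmat C x i i = x i := by
  simp [Wmat_apply, hCdiag]

theorem Wmat_apply_of_ne {i j : Fin n} (h : i ≠ j) : Wmat C x i j = (1 - x i) * C i j := by
  simp [Wmat_apply, h]

theorem Wmat_mem_rowStochastic (hC : C ∈ rowStochastic ℝ (Fin n)) (hx0 : ∀ i, 0 ≤ x i)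
    (hx1 : ∀ i, x i ≤ 1) : Wmat C x ∈ rowStochastic ℝ (Fin n) := by
  refine mem_rowStochastic.2 ⟨fun i j => ?_, ?_⟩
  · rw [Wmat_apply]
    have := mul_nonneg (sub_nonneg.2 (hx1 i)) (nonneg_of_mem_rowStochastic hC (i := i) (j := j))
    split_ifs <;> linarith [hx0 i]
  · rw [Wmat, add_mulVec, ← mulVec_mulVec, one_vecMul_of_mem_rowStochastic hC, sub_mulVec,
      one_mulVec, add_sub_cancel]

end Wmat

section FixedPoint

variable {n : ℕ} {C : Matrix (Fin n) (Fin n) ℝ} {θ x y : Fin n → ℝ}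

theorem exists_of_Fmap_eq_self (hdet : (1 - (Wmat C x)ᵀ * diagonal θ).det ≠ 0)
    (hfix : Fmap C θ x = x) :
    ∃ y : Fin n → ℝ, (∀ i, x i = (1 - θ i) * y i) ∧
      ∀ i, y i = 1 / n + ((θ * y) ᵥ* Wmat C x) i := by
  set B := 1 - (Wmat C x)ᵀ * diagonal θ
  set y := B⁻¹ *ᵥ fun _ => 1 / (n : ℝ)
  have hBy : B *ᵥ y = fun _ => 1 / (n : ℝ) := by
    rw [mulVec_mulVec, mul_nonsing_inv _ (isUnit_iff_ne_zero.2 hdet), one_mulVec]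
  refine ⟨y, fun i => ?_, fun i => ?_⟩
  · calc x i = Fmap C θ x i := by rw [hfix]
      _ = (1 - θ i) * y i := by
        simp only [Fmap, ← mulVec_mulVec, sub_mulVec, one_mulVec, Pi.sub_apply, mulVec_diagonal]
        ring
  · have hθy : diagonal θ *ᵥ y = θ * y := funext (mulVec_diagonal θ y)
    have h := congrFun hBy i
    simp only [B, sub_mulVec, one_mulVec, ← mulVec_mulVec, mulVec_transpose, hθy,
      Pi.sub_apply] at h
    linarith

theorem vecMul_Wmat_apply_of_forall (hCdiag : ∀ i, C i i = 0) (hθ0 : ∀ j, 0 ≤ θ j) {i : Fin n}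
    (hCi : ∀ j, 0 < θ j → C j i = 0) : ((θ * y) ᵥ* Wmat C x) i = θ i * y i * x i := by
  rw [vecMul, dotProduct, sum_eq_single i]
  · simp [Wmat_apply_self hCdiag]
  · intro j _ hji
    rcases (hθ0 j).eq_or_lt with hj | hj
    · simp [← hj]
    · simp [Wmat_apply_of_ne hji, hCi j hj]
  · simp

theorem vecMul_Wmat_apply_eq_zero_iff (hC : C ∈ rowStochastic ℝ (Fin n))
    (hCdiag : ∀ i, C i i = 0) (hθ0 : ∀ j, 0 ≤ θ j) (hx0 : ∀ j, 0 ≤ x j) (hx1 : ∀ j, x j < 1)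
    (hy : ∀ j, 0 < y j) {i : Fin n} (hi : θ i = 0) :
    ((θ * y) ᵥ* Wmat C x) i = 0 ↔ ∀ j, 0 < θ j → C j i = 0 := by
  refine ⟨fun h j hj => ?_, fun h => by rw [vecMul_Wmat_apply_of_forall hCdiag hθ0 h, hi]; ring⟩
  by_contra hCji
  have hji : j ≠ i := by rintro rfl; linarith
  have hW := Wmat_mem_rowStochastic hC hx0 fun j => (hx1 j).le
  have hterm : 0 < (θ * y) j * Wmat C x j i := by
    rw [Wmat_apply_of_ne hji]
    exact mul_pos (mul_pos hj (hy j))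
      (mul_pos (sub_pos.2 (hx1 j)) ((nonneg_of_mem_rowStochastic hC).lt_of_ne' hCji))
  have := mul_le_vecMul_apply (mem_rowStochastic.1 hW).1 (v := θ * y)
    (fun k => mul_nonneg (hθ0 k) (hy k).le) i j
  linarith

theorem vecMul_Wmat_apply_pos (hW : Wmat C x ∈ rowStochastic ℝ (Fin n))
    (hCdiag : ∀ i, C i i = 0) (hθ0 : ∀ j, 0 ≤ θ j) (hx : ∀ j, 0 < x j) (hy : ∀ j, 0 < y j)
    {i : Fin n} (hi : 0 < θ i) : 0 < ((θ * y) ᵥ* Wmat C x) i := by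
  have hterm : 0 < (θ * y) i * Wmat C x i i := by
    rw [Wmat_apply_self hCdiag]
    exact mul_pos (mul_pos hi (hy i)) (hx i)
  have := mul_le_vecMul_apply (mem_rowStochastic.1 hW).1 (v := θ * y)
    (fun k => mul_nonneg (hθ0 k) (hy k).le) i i
  linarith

end FixedPoint

theorem lt_one_of_mem_simplex {n : ℕ} (hn : 2 ≤ n) {x : Fin n → ℝ} (hx : x ∈ simplex n)
    (hpos : ∀ i, 0 < x i) (i : Fin n) : x i < 1 := by
  have : Nontrivial (Fin n) := Fin.nontrivial_iff_two_le.2 hn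
  obtain ⟨j, hji⟩ := exists_ne i
  rw [← hx.2]
  exact single_lt_sum hji (mem_univ i) (mem_univ j) (hpos j) fun k _ _ => (hpos k).le

theorem lt_of_eq_mul_add_mul_sq {c θ x : ℝ} (hc : 0 < c) (hθ0 : 0 < θ) (hθ1 : θ < 1)
    (hx1 : x < 1) (h : x = (1 - θ) * c + θ * x ^ 2) : x < c := by
  by_contra! hcx
  have hθx : θ * x < θ := mul_lt_of_lt_one_right hθ0 hx1
  nlinarith [mul_le_mul_of_nonneg_right hcx (by linarith : 0 ≤ 1 - θ * x),
    mul_lt_mul_of_pos_left hθx hc]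

theorem lt_one_div_add_sum_div {n : ℕ} {θ t x : Fin n → ℝ} (hθ0 : ∀ k, 0 ≤ θ k)
    (hθ1 : ∀ k, θ k < 1) (hθex : ∃ j, 0 < θ j) (ht0 : ∀ k, 0 ≤ t k)
    (htpos : ∀ k, 0 < θ k → 0 < t k) (hx : ∀ k, x k = (1 - θ k) / n + (1 - θ k) * t k)
    (hxsum : ∑ k, x k = 1) (i : Fin n) : x i < 1 / n + (∑ j, θ j) / n := by
  have hn : (0 : ℝ) < n := by exact_mod_cast i.pos
  have hsum : ∑ k, (1 - θ k) * t k = (∑ j, θ j) / n := by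
    simp only [hx, sum_add_distrib, ← sum_div, sum_sub_distrib, sum_const, card_univ,
      Fintype.card_fin, nsmul_eq_mul, mul_one] at hxsum
    field_simp at hxsum ⊢
    linarith
  have hs0 : ∀ k, 0 ≤ (1 - θ k) * t k := fun k => mul_nonneg (by linarith [hθ1 k]) (ht0 k)
  rw [hx i, ← hsum]
  rcases (hθ0 i).eq_or_lt with hi | hi
  · obtain ⟨j, hj⟩ := hθex
    have hji : j ≠ i := by rintro rfl; linarith
    have := single_lt_sum hji (mem_univ i) (mem_univ j)
      (mul_pos (by linarith [hθ1 j]) (htpos j hj)) fun k _ _ => hs0 k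
    rw [← hi] at this ⊢
    linarith
  · have := single_le_sum (fun k _ => hs0 k) (mem_univ i)
    have := div_lt_div_of_pos_right (by linarith : 1 - θ i < 1) hn
    linarith

theorem stmt5 (n : ℕ) (hn : 2 ≤ n) (C : Matrix (Fin n) (Fin n) ℝ)
    (hCnonneg : ∀ i j, 0 ≤ C i j) (hCrow : ∀ i, ∑ j, C i j = 1)
    (hCdiag : ∀ i, C i i = 0)
    (θ : Fin n → ℝ) (hθ0 : ∀ i, 0 ≤ θ i) (hθ1 : ∀ i, θ i < 1) (hθex : ∃ j, 0 < θ j)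
    (xstar : Fin n → ℝ) (hmem : xstar ∈ simplex n) (hfix : Fmap C θ xstar = xstar) :
    (∀ i, θ i = 0 →
      1 / n ≤ xstar i ∧ (xstar i = 1 / n ↔ ∀ j, 0 < θ j → C j i = 0)) ∧
    (∀ i, 0 < θ i →
      (1 - θ i) / n < xstar i ∧ ((∀ j, 0 < θ j → C j i = 0) → xstar i < 1 / n)) ∧
    (∀ i, xstar i < 1 / n + (∑ j, θ j) / n) := by
  have hC : C ∈ rowStochastic ℝ (Fin n) := mem_rowStochastic_iff_sum.2 ⟨hCnonneg, hCrow⟩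
  have hn0 : (0 : ℝ) < 1 / n := one_div_pos.2 (Nat.cast_pos.2 (by omega))
  obtain ⟨hx0, hxsum⟩ := hmem
  have hW := Wmat_mem_rowStochastic hC hx0 fun i =>
    hxsum ▸ single_le_sum (fun j _ => hx0 j) (mem_univ i)
  obtain ⟨y, hxy, hy⟩ :=
    exists_of_Fmap_eq_self (det_one_sub_transpose_mul_diagonal_ne_zero hW hθ0 hθ1) hfix
  set t := (θ * y) ᵥ* Wmat C xstar
  have hy0 : ∀ i, 0 ≤ y i := fun i =>
    nonneg_of_mul_nonneg_right (hxy i ▸ hx0 i) (sub_pos.2 (hθ1 i))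
  have ht0 : ∀ i, 0 ≤ t i :=
    nonneg_vecMul_of_mem_rowStochastic hW fun i => mul_nonneg (hθ0 i) (hy0 i)
  have hypos : ∀ i, 0 < y i := fun i => hy i ▸ add_pos_of_pos_of_nonneg hn0 (ht0 i)
  have hxpos : ∀ i, 0 < xstar i := fun i => hxy i ▸ mul_pos (sub_pos.2 (hθ1 i)) (hypos i)
  have hx1 := lt_one_of_mem_simplex hn ⟨hx0, hxsum⟩ hxpos
  have htpos : ∀ i, 0 < θ i → 0 < t i := fun i =>
    vecMul_Wmat_apply_pos hW hCdiag hθ0 hxpos hypos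
  have hxt : ∀ i, xstar i = (1 - θ i) / n + (1 - θ i) * t i := fun i => by
    rw [hxy i, hy i]; ring
  refine ⟨fun i hi => ?_, fun i hi => ⟨?_, fun hCi => ?_⟩,
    lt_one_div_add_sum_div hθ0 hθ1 hθex ht0 htpos hxt hxsum⟩
  · have hxi : xstar i = 1 / n + t i := by rw [hxt i, hi]; ring
    rw [hxi, add_eq_left, vecMul_Wmat_apply_eq_zero_iff hC hCdiag hθ0 hx0 hx1 hypos hi]
    exact ⟨le_add_of_nonneg_right (ht0 i), Iff.rfl⟩
  · rw [hxt i]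
    linarith [mul_pos (sub_pos.2 (hθ1 i)) (htpos i hi)]
  · refine lt_of_eq_mul_add_mul_sq hn0 hi (hθ1 i) (hx1 i) ?_
    calc xstar i = (1 - θ i) / n + (1 - θ i) * t i := hxt i
      _ = (1 - θ i) * (1 / n) + θ i * ((1 - θ i) * y i) * xstar i := by
        rw [show t i = θ i * y i * xstar i from vecMul_Wmat_apply_of_forall hCdiag hθ0 hCi]
        ring
      _ = (1 - θ i) * (1 / n) + θ i * xstar i ^ 2 := by rw [← hxy i]; ring
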